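/- Let M be a symmetric positive definite n×n real matrix and let K be a symmetric n×n real matrix. Then the 2n×2n block matrix Υ := [[2M⁻¹, M⁻¹ − I], [M⁻¹ − I, 2K]] is positive definite if and only if the n×n matrix K + (1/2)·I − (1/4)·(M⁻¹ + M) is positive definite. -/

import Mathlib

/-!
By the Schur complement, `Υ` is positive definite iff `2K - (M⁻¹ - I)(2M⁻¹)⁻¹(M⁻¹ - I)` is.
Since `(M⁻¹ - I) M (M⁻¹ - I) = M⁻¹ + M - 2I`, this Schur complement equals
`2 (K + ½ I - ¼ (M⁻¹ + M))`, and positive definiteness is invariant under positive scaling.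
-/

open Matrix
open scoped ComplexOrder

namespace Matrix

theorem posDef_smul_iff {n : Type*} [Fintype n] {c : ℝ} (hc : 0 < c) (A : Matrix n n ℝ) :
    (c • A).PosDef ↔ A.PosDef :=
  ⟨fun h => by simpa [smul_smul, hc.ne'] using h.smul (inv_pos.2 hc), fun h => h.smul hc⟩

variable {m n 𝕜 : Type*} [Fintype m] [Fintype n] [DecidableEq m] [DecidableEq n] [RCLike 𝕜]

theorem posDef_iff_posSemidef_and_det_ne_zero {A : Matrix n n 𝕜} :
    A.PosDef ↔ A.PosSemidef ∧ A.det ≠ 0 :=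
  ⟨fun h => ⟨h.posSemidef, h.det_pos.ne'⟩, fun ⟨h, hdet⟩ => h.posDef_iff_det_ne_zero.2 hdet⟩

theorem posDef_fromBlocks₁₁_iff {A : Matrix m m 𝕜} (B : Matrix m n 𝕜) (D : Matrix n n 𝕜)
    (hA : A.PosDef) : (fromBlocks A B Bᴴ D).PosDef ↔ (D - Bᴴ * A⁻¹ * B).PosDef := by
  have := hA.isUnit.invertible
  have hdetA : A.det ≠ 0 := hA.det_pos.ne'
  rw [posDef_iff_posSemidef_and_det_ne_zero, posDef_iff_posSemidef_and_det_ne_zero,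
    PosDef.fromBlocks₁₁ B D hA, det_fromBlocks₁₁, invOf_eq_nonsing_inv, mul_ne_zero_iff,
    and_iff_right hdetA]

theorem inv_sub_one_mul_mul_inv_sub_one {n R : Type*} [Fintype n] [DecidableEq n] [CommRing R]
    {M : Matrix n n R} (hM : IsUnit M.det) : (M⁻¹ - 1) * M * (M⁻¹ - 1) = M⁻¹ + M - (2 : R) • 1 := by
  simp only [Matrix.sub_mul, Matrix.mul_sub, Matrix.one_mul, Matrix.mul_one,
    nonsing_inv_mul M hM, mul_nonsing_inv M hM, two_smul]
  abel

end Matrix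

theorem upsilon_posDef_iff_gain_condition
    {n : ℕ}
    (M K : Matrix (Fin n) (Fin n) ℝ)
    (hM : M.PosDef) :
    (Matrix.fromBlocks ((2 : ℝ) • M⁻¹) (M⁻¹ - 1) (M⁻¹ - 1) ((2 : ℝ) • K)).PosDef ↔
      (K + (1/2 : ℝ) • (1 : Matrix (Fin n) (Fin n) ℝ) - (1/4 : ℝ) • (M⁻¹ + M)).PosDef := by
  have hdet : IsUnit M.det := hM.isUnit.map detMonoidHom
  have hB : (M⁻¹ - 1 : Matrix (Fin n) (Fin n) ℝ)ᴴ = M⁻¹ - 1 := by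
    rw [conjTranspose_sub, hM.inv.1.eq, conjTranspose_one]
  have hA_inv : ((2 : ℝ) • M⁻¹)⁻¹ = (2⁻¹ : ℝ) • M := by
    refine inv_eq_right_inv ?_
    rw [Matrix.smul_mul, Matrix.mul_smul, smul_smul, nonsing_inv_mul M hdet]
    norm_num
  have hSchur : (2 : ℝ) • K - (M⁻¹ - 1) * ((2 : ℝ) • M⁻¹)⁻¹ * (M⁻¹ - 1) =
      (2 : ℝ) • (K + (1/2 : ℝ) • (1 : Matrix (Fin n) (Fin n) ℝ) - (1/4 : ℝ) • (M⁻¹ + M)) := by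
    rw [hA_inv, Matrix.mul_smul, Matrix.smul_mul, inv_sub_one_mul_mul_inv_sub_one hdet]
    module
  have hΥ := posDef_fromBlocks₁₁_iff (M⁻¹ - 1) ((2 : ℝ) • K) (hM.inv.smul (two_pos (α := ℝ)))
  rwa [hB, hSchur, posDef_smul_iff two_pos] at hΥ
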